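/- Let R be an n × n^{m−1} column-stochastic matrix, v stochastic, α < 1/(m−1), and x the unique stochastic solution. Define S(y) = (1/(m−1)) R (I ⊗ y^{⊗(m−2)} + y ⊗ I ⊗ y^{⊗(m−3)} + ⋯ + y^{⊗(m−2)} ⊗ I), a column-stochastic n × n matrix for stochastic y. If stochastic vectors x^{(k)} satisfy x^{(k+1)} = α S(x^{(k)}) x^{(k+1)} + (1−α) v, then ‖x^{(k)} − x‖₁ ≤ ((m−2)α/(1−α))^k ‖x^{(0)} − x‖₁. -/

import Mathlib

/-!
Write `S(y) z` as the average over the slots `p` of `R` applied to the Kronecker product carrying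
`z` in slot `p` and `y` in the others. Then `S(y)` is column-stochastic, `S(x) x = R x^{⊗(m-1)}`,
and subtracting the fixed-point equation of `x` from the recursion gives
`e_{k+1} = α S(x_k) e_{k+1} + α (S(x_k) - S(x)) x`. A column-stochastic matrix does not increase
the 1-norm, and since the 1-norm is multiplicative on Kronecker products, exchanging the `m - 2`
factors `y` for `x` one at a time gives `‖(S(y) - S(x)) x‖₁ ≤ (m - 2) ‖y - x‖₁`.
Hence `(1 - α) ‖e_{k+1}‖₁ ≤ (m - 2) α ‖e_k‖₁`.
-/

open Finset Matrix

def StochV {α : Type*} [Fintype α] (x : α → ℝ) : Prop :=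
  (∀ i, 0 ≤ x i) ∧ ∑ i, x i = 1

def norm1 {α : Type*} [Fintype α] (x : α → ℝ) : ℝ := ∑ i, |x i|

def kron {α β : Type*} (a : α → ℝ) (b : β → ℝ) : α × β → ℝ := fun p => a p.1 * b p.2

def kpow {n : ℕ} (x : Fin n → ℝ) (k : ℕ) : (Fin k → Fin n) → ℝ := fun f => ∏ i, x (f i)

def ColStoch {α β : Type*} [Fintype α] (R : Matrix α β ℝ) : Prop :=
  (∀ i j, 0 ≤ R i j) ∧ ∀ j, ∑ i, R i j = 1

noncomputable def Smat {n m : ℕ} (R : Matrix (Fin n) (Fin (m - 1) → Fin n) ℝ)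
    (y : Fin n → ℝ) : Matrix (Fin n) (Fin n) ℝ :=
  fun i l => (1 / ((m : ℝ) - 1)) * ∑ p : Fin (m - 1), ∑ f : Fin (m - 1) → Fin n,
    R i f * (if f p = l then (1 : ℝ) else 0) * ∏ q ∈ Finset.univ.erase p, y (f q)

section Norm1

variable {ι : Type*} [Fintype ι]

lemma norm1_zero : norm1 (0 : ι → ℝ) = 0 := by
  simp [norm1]

lemma norm1_add_le (z w : ι → ℝ) : norm1 (z + w) ≤ norm1 z + norm1 w := by
  rw [norm1, norm1, norm1, ← sum_add_distrib]
  exact sum_le_sum fun i _ => abs_add_le (z i) (w i)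

lemma norm1_sub_le_add (a b c : ι → ℝ) : norm1 (a - c) ≤ norm1 (a - b) + norm1 (b - c) := by
  simpa using norm1_add_le (a - b) (b - c)

lemma norm1_smul (c : ℝ) (z : ι → ℝ) : norm1 (c • z) = |c| * norm1 z := by
  simp only [norm1, Pi.smul_apply, smul_eq_mul, abs_mul, mul_sum]

lemma norm1_sum_le {σ : Type*} (s : Finset σ) (z : σ → ι → ℝ) :
    norm1 (∑ p ∈ s, z p) ≤ ∑ p ∈ s, norm1 (z p) := by
  simp only [norm1, Finset.sum_apply]
  rw [sum_comm]
  exact sum_le_sum fun i _ => abs_sum_le_sum_abs _ _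

lemma StochV.norm1_eq_one {x : ι → ℝ} (hx : StochV x) : norm1 x = 1 := by
  rw [norm1, ← hx.2]
  exact sum_congr rfl fun i _ => abs_of_nonneg (hx.1 i)

lemma stochV_single [DecidableEq ι] (j : ι) : StochV (Pi.single j (1 : ℝ)) :=
  ⟨fun i => by rw [Pi.single_apply]; split_ifs <;> norm_num, by simp⟩

lemma stochV_average {σ : Type*} [Fintype σ] [Nonempty σ] {z : σ → ι → ℝ}
    (hz : ∀ p, StochV (z p)) : StochV ((Fintype.card σ : ℝ)⁻¹ • ∑ p, z p) := by
  refine ⟨fun i => ?_, ?_⟩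
  · simp only [Pi.smul_apply, Finset.sum_apply, smul_eq_mul]
    exact mul_nonneg (by positivity) (sum_nonneg fun p _ => (hz p).1 i)
  · simp only [Pi.smul_apply, Finset.sum_apply, smul_eq_mul, ← mul_sum]
    rw [sum_comm]
    simp [(hz _).2]

end Norm1

section ColStoch

variable {ι β : Type*} [Fintype ι] [Fintype β] {A : Matrix ι β ℝ}

lemma ColStoch.sum_mulVec (hA : ColStoch A) (z : β → ℝ) :
    ∑ i, (A *ᵥ z) i = ∑ j, z j := by
  simp only [mulVec, dotProduct]
  rw [sum_comm]
  simp [← sum_mul, hA.2]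

lemma ColStoch.norm1_mulVec_le (hA : ColStoch A) (z : β → ℝ) : norm1 (A *ᵥ z) ≤ norm1 z :=
  calc norm1 (A *ᵥ z) ≤ ∑ i, (A *ᵥ fun j => |z j|) i := sum_le_sum fun i _ => by
          simp only [mulVec, dotProduct]
          refine (abs_sum_le_sum_abs _ _).trans_eq (sum_congr rfl fun j _ => ?_)
          rw [abs_mul, abs_of_nonneg (hA.1 i j)]
    _ = norm1 z := hA.sum_mulVec _

lemma ColStoch.stochV_mulVec (hA : ColStoch A) {z : β → ℝ} (hz : StochV z) :
    StochV (A *ᵥ z) :=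
  ⟨fun i => sum_nonneg fun j _ => mul_nonneg (hA.1 i j) (hz.1 j), (hA.sum_mulVec z).trans hz.2⟩

lemma colStoch_of_stochV_mulVec_single [DecidableEq β]
    (h : ∀ j, StochV (A *ᵥ Pi.single j 1)) : ColStoch A := by
  simp only [mulVec_single_one] at h
  exact ⟨fun i j => (h j).1 i, fun j => (h j).2⟩

lemma norm1_sub_le_of_fixedPoints {B C : Matrix ι ι ℝ} (hB : ColStoch B)
    {α : ℝ} (hα : 0 ≤ α) {u w v : ι → ℝ}
    (hu : u = α • (B *ᵥ u) + (1 - α) • v) (hw : w = α • (C *ᵥ w) + (1 - α) • v) :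
    (1 - α) * norm1 (u - w) ≤ α * norm1 (B *ᵥ w - C *ᵥ w) := by
  have hdiff : u - w = α • (B *ᵥ (u - w) + (B *ᵥ w - C *ᵥ w)) :=
    calc u - w = (α • (B *ᵥ u) + (1 - α) • v) - (α • (C *ᵥ w) + (1 - α) • v) := by
          rw [← hu, ← hw]
      _ = α • (B *ᵥ (u - w) + (B *ᵥ w - C *ᵥ w)) := by
          rw [mulVec_sub]
          module
  have hle : norm1 (u - w) ≤ α * (norm1 (u - w) + norm1 (B *ᵥ w - C *ᵥ w)) := by
    conv_lhs => rw [hdiff, norm1_smul, abs_of_nonneg hα]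
    exact mul_le_mul_of_nonneg_left
      ((norm1_add_le _ _).trans (add_le_add_left (hB.norm1_mulVec_le _) _)) hα
  linarith

end ColStoch

section KronProd

variable {ι κ : Type*} [Fintype ι]

def kronProd (u : ι → κ → ℝ) : (ι → κ) → ℝ := fun f => ∏ q, u q (f q)

lemma norm1_kronProd [DecidableEq ι] [Fintype κ] (u : ι → κ → ℝ) :
    norm1 (kronProd u) = ∏ q, norm1 (u q) := by
  simp only [norm1, kronProd, abs_prod, Fintype.prod_sum]

lemma stochV_kronProd [DecidableEq ι] [Fintype κ] {u : ι → κ → ℝ}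
    (hu : ∀ q, StochV (u q)) : StochV (kronProd u) := by
  refine ⟨fun f => prod_nonneg fun q _ => (hu q).1 _, ?_⟩
  simp only [kronProd, ← Fintype.prod_sum]
  exact prod_eq_one fun q _ => (hu q).2

variable [DecidableEq ι]

lemma kronProd_update (u : ι → κ → ℝ) (r : ι) (z : κ → ℝ) (f : ι → κ) :
    kronProd (Function.update u r z) f = z (f r) * ∏ q ∈ univ.erase r, u q (f q) := by
  rw [kronProd, ← mul_prod_erase univ _ (mem_univ r), Function.update_self]
  congr 1
  exact prod_congr rfl fun q hq => by rw [Function.update_of_ne (ne_of_mem_erase hq)]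

lemma kronProd_sub_kronProd_update (u : ι → κ → ℝ) (r : ι) (w : κ → ℝ) :
    kronProd u - kronProd (Function.update u r w) = kronProd (Function.update u r (u r - w)) := by
  funext f
  simp only [Pi.sub_apply, kronProd_update]
  rw [kronProd, ← mul_prod_erase univ _ (mem_univ r)]
  ring

lemma norm1_kronProd_sub_kronProd_update [Fintype κ] {u : ι → κ → ℝ} {r : ι}
    (hu : ∀ q ≠ r, norm1 (u q) = 1) (w : κ → ℝ) :
    norm1 (kronProd u - kronProd (Function.update u r w)) = norm1 (u r - w) := by
  rw [kronProd_sub_kronProd_update, norm1_kronProd, Fintype.prod_eq_mul_prod_compl r,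
    Function.update_self, prod_eq_one fun q hq => ?_, mul_one]
  rw [mem_compl, mem_singleton] at hq
  rw [Function.update_of_ne hq, hu q hq]

-- Hybrid argument: exchange the factors of `kronProd a` for those of `kronProd b` one at a time.
lemma norm1_kronProd_sub_le [Fintype κ] {a b : ι → κ → ℝ} (ha : ∀ q, norm1 (a q) = 1)
    (hb : ∀ q, norm1 (b q) = 1) :
    norm1 (kronProd a - kronProd b) ≤ ∑ q, norm1 (a q - b q) := by
  suffices h : ∀ s : Finset ι,
      norm1 (kronProd a - kronProd (s.piecewise b a)) ≤ ∑ q ∈ s, norm1 (a q - b q) by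
    simpa using h univ
  intro s
  induction s using Finset.induction_on with
  | empty => simp [norm1]
  | insert r s hr ih =>
    have hc : ∀ q ≠ r, norm1 (s.piecewise b a q) = 1 := fun q _ => by
      by_cases hq : q ∈ s <;> simp [hq, ha, hb]
    rw [piecewise_insert, sum_insert hr, add_comm]
    calc _ ≤ _ := norm1_sub_le_add _ (kronProd (s.piecewise b a)) _
      _ ≤ _ := by
        rw [norm1_kronProd_sub_kronProd_update hc, piecewise_eq_of_notMem s b a hr]
        exact add_le_add ih le_rfl

end KronProd

section Smat

variable {n m : ℕ} (R : Matrix (Fin n) (Fin (m - 1) → Fin n) ℝ)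

lemma Smat_mulVec (y z : Fin n → ℝ) :
    Smat R y *ᵥ z =
      (1 / ((m : ℝ) - 1)) • ∑ p, R *ᵥ kronProd (Function.update (fun _ => y) p z) := by
  funext i
  simp only [Smat, mulVec, dotProduct, Pi.smul_apply, Finset.sum_apply, smul_eq_mul,
    kronProd_update, mul_sum, sum_mul]
  rw [sum_comm]
  refine sum_congr rfl fun p _ => ?_
  rw [sum_comm]
  refine sum_congr rfl fun f _ => ?_
  simp only [mul_ite, ite_mul, mul_one, mul_zero, zero_mul, sum_ite_eq, mem_univ, if_true]
  ring

lemma one_div_cast_sub_one (hm : 1 ≤ m) :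
    1 / ((m : ℝ) - 1) = (Fintype.card (Fin (m - 1)) : ℝ)⁻¹ := by
  rw [Fintype.card_fin, Nat.cast_sub hm, one_div, Nat.cast_one]

variable {R}

lemma stochV_Smat_mulVec (hm : 2 ≤ m) (hR : ColStoch R) {y z : Fin n → ℝ} (hy : StochV y)
    (hz : StochV z) : StochV (Smat R y *ᵥ z) := by
  have : Nonempty (Fin (m - 1)) := ⟨⟨0, by omega⟩⟩
  rw [Smat_mulVec, one_div_cast_sub_one (by omega)]
  refine stochV_average fun p => hR.stochV_mulVec (stochV_kronProd fun q => ?_)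
  rcases eq_or_ne q p with rfl | hqp
  · rwa [Function.update_self]
  · rwa [Function.update_of_ne hqp]

lemma colStoch_Smat (hm : 2 ≤ m) (hR : ColStoch R) {y : Fin n → ℝ} (hy : StochV y) :
    ColStoch (Smat R y) :=
  colStoch_of_stochV_mulVec_single fun l => stochV_Smat_mulVec hm hR hy (stochV_single l)

lemma Smat_mulVec_self (hm : 2 ≤ m) (x : Fin n → ℝ) :
    Smat R x *ᵥ x = R *ᵥ kpow x (m - 1) := by
  have hcard : (Fintype.card (Fin (m - 1)) : ℝ) ≠ 0 := by
    rw [Fintype.card_fin, Nat.cast_ne_zero]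
    omega
  rw [Smat_mulVec, one_div_cast_sub_one (by omega)]
  simp only [Function.update_eq_self, sum_const, card_univ]
  rw [← Nat.cast_smul_eq_nsmul ℝ, smul_smul, inv_mul_cancel₀ hcard, one_smul]
  rfl

lemma norm1_Smat_mulVec_sub_le (hm : 2 ≤ m) (hR : ColStoch R) {x y : Fin n → ℝ}
    (hx : norm1 x = 1) (hy : norm1 y = 1) :
    norm1 (Smat R y *ᵥ x - Smat R x *ᵥ x) ≤ ((m : ℝ) - 2) * norm1 (y - x) := by
  have hm1 : (0 : ℝ) < (m : ℝ) - 1 := by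
    have : (2 : ℝ) ≤ m := by exact_mod_cast hm
    linarith
  have hslots : ∀ p : Fin (m - 1),
      ∑ q, norm1 (Function.update (fun _ => y) p x q - x) = ((m : ℝ) - 2) * norm1 (y - x) := by
    intro p
    rw [Fintype.sum_eq_add_sum_compl p, Function.update_self, sub_self,
      sum_congr rfl fun q hq => by rw [Function.update_of_ne (by simpa using hq)]]
    rw [norm1_zero, zero_add, sum_const, card_compl, card_singleton, Fintype.card_fin,
      nsmul_eq_mul, Nat.sub_sub, Nat.cast_sub hm]
    norm_num
  rw [Smat_mulVec, Smat_mulVec, ← smul_sub, ← sum_sub_distrib, norm1_smul,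
    abs_of_pos (one_div_pos.mpr hm1)]
  calc 1 / ((m : ℝ) - 1) * norm1 (∑ p, (R *ᵥ kronProd (Function.update (fun _ => y) p x) -
        R *ᵥ kronProd (Function.update (fun _ => x) p x)))
      ≤ 1 / ((m : ℝ) - 1) * ∑ p : Fin (m - 1),
          norm1 (kronProd (Function.update (fun _ => y) p x) - kronProd fun _ => x) := by
        gcongr
        refine (norm1_sum_le _ _).trans (sum_le_sum fun p _ => ?_)
        rw [← mulVec_sub, Function.update_eq_self_iff.mpr rfl]
        exact hR.norm1_mulVec_le _
    _ ≤ 1 / ((m : ℝ) - 1) * ∑ p : Fin (m - 1), ((m : ℝ) - 2) * norm1 (y - x) := by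
        gcongr with p
        rw [← hslots p]
        refine norm1_kronProd_sub_le (fun q => ?_) fun _ => hx
        rcases eq_or_ne q p with rfl | hqp
        · rwa [Function.update_self]
        · rwa [Function.update_of_ne hqp]
    _ = ((m : ℝ) - 2) * norm1 (y - x) := by
        rw [sum_const, card_univ, Fintype.card_fin, nsmul_eq_mul, Nat.cast_sub (by omega)]
        field_simp
        ring

end Smat

theorem stmt13_general {n m : ℕ} (hm : 2 ≤ m)
    (R : Matrix (Fin n) (Fin (m - 1) → Fin n) ℝ) (hR : ColStoch R)
    (v : Fin n → ℝ)
    (α : ℝ) (hα0 : 0 ≤ α) (hα : α < 1 / ((m : ℝ) - 1))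
    (x : Fin n → ℝ) (hx : StochV x)
    (hxe : x = fun i => α * R.mulVec (kpow x (m - 1)) i + (1 - α) * v i)
    (X : ℕ → (Fin n → ℝ)) (hXs : ∀ k, StochV (X k))
    (hrec : ∀ k, X (k + 1) = fun i =>
      α * (Smat R (X k)).mulVec (X (k + 1)) i + (1 - α) * v i) :
    (∀ y : Fin n → ℝ, StochV y → ColStoch (Smat R y)) ∧
    ∀ k, norm1 (X k - x) ≤ ((((m : ℝ) - 2) * α) / (1 - α)) ^ k * norm1 (X 0 - x) := by
  have hm2 : (2 : ℝ) ≤ m := by exact_mod_cast hm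
  have hα1 : 0 < 1 - α := by
    have : 1 / ((m : ℝ) - 1) ≤ 1 := by rw [div_le_one (by linarith)]; linarith
    linarith
  have hfix : x = α • (Smat R x *ᵥ x) + (1 - α) • v := by
    rw [Smat_mulVec_self hm]
    exact hxe
  have hstep : ∀ k, norm1 (X (k + 1) - x) ≤ ((m - 2) * α / (1 - α)) * norm1 (X k - x) := by
    intro k
    have hpert := norm1_sub_le_of_fixedPoints (colStoch_Smat hm hR (hXs k)) hα0 (hrec k) hfix
    have hlip := norm1_Smat_mulVec_sub_le hm hR hx.norm1_eq_one (hXs k).norm1_eq_one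
    rw [div_mul_eq_mul_div, le_div_iff₀ hα1]
    linarith [mul_le_mul_of_nonneg_left hlip hα0]
  have hrate : 0 ≤ ((m : ℝ) - 2) * α / (1 - α) :=
    div_nonneg (mul_nonneg (by linarith) hα0) hα1.le
  exact ⟨fun y hy => colStoch_Smat hm hR hy,
    fun k => le_geom (u := fun k => norm1 (X k - x)) hrate k fun j _ => hstep j⟩

theorem stmt13 {n m : ℕ} (hm : 2 ≤ m)
    (R : Matrix (Fin n) (Fin (m - 1) → Fin n) ℝ) (hR : ColStoch R)
    (v : Fin n → ℝ) (hv : StochV v)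
    (α : ℝ) (hα0 : 0 ≤ α) (hα : α < 1 / ((m : ℝ) - 1))
    (x : Fin n → ℝ) (hx : StochV x)
    (hxe : x = fun i => α * R.mulVec (kpow x (m - 1)) i + (1 - α) * v i)
    (X : ℕ → (Fin n → ℝ)) (hXs : ∀ k, StochV (X k))
    (hrec : ∀ k, X (k + 1) = fun i =>
      α * (Smat R (X k)).mulVec (X (k + 1)) i + (1 - α) * v i) :
    (∀ y : Fin n → ℝ, StochV y → ColStoch (Smat R y)) ∧
    ∀ k, norm1 (X k - x) ≤ ((((m : ℝ) - 2) * α) / (1 - α)) ^ k * norm1 (X 0 - x) :=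
  stmt13_general hm R hR v α hα0 hα x hx hxe X hXs hrec
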